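/- If x : ℝ → ℝ is continuously differentiable on [0,T] with |x'(t) − a₁| ≤ ε for all t ∈ [0,T] and some constants a₁, ε ≥ 0, then the estimator E(x,T) = (6/T³)·∫₀ᵀ (2τ − T)·x(τ) dτ satisfies |E(x,T) − a₁| ≤ (3/2)·ε. -/

import Mathlib

/-!
The estimator annihilates constants and recovers the slope of a line, so `E x - a₁ = E y` with
`y t = x t - a₁ t - c` for any constant `c`. By the mean value theorem `y` is `ε`-Lipschitz on
`[0, T]`; choosing `c = y (T / 2)` gives `|(2τ - T) y τ| ≤ ε (2τ - T)² / 2`, whose integral is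
`ε T³ / 6`. Hence in fact `|E x - a₁| ≤ ε`.
-/

open MeasureTheory Set NNReal

noncomputable def slopeEstimator (T : ℝ) (x : ℝ → ℝ) : ℝ :=
  6 / T ^ 3 * ∫ τ in (0 : ℝ)..T, (2 * τ - T) * x τ

theorem integral_weight_mul_affine (T a c : ℝ) :
    ∫ τ in (0 : ℝ)..T, (2 * τ - T) * (a * τ + c) = a * T ^ 3 / 6 := by
  have hexpand : ∀ τ : ℝ, (2 * τ - T) * (a * τ + c) = 2 * a * τ ^ 2 + (2 * c - T * a) * τ - T * c :=
    fun τ => by ring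
  simp only [hexpand]
  rw [intervalIntegral.integral_sub, intervalIntegral.integral_add,
    intervalIntegral.integral_const_mul, intervalIntegral.integral_const_mul, integral_pow,
    integral_id, intervalIntegral.integral_const, smul_eq_mul]
  · ring
  all_goals exact Continuous.intervalIntegrable (by fun_prop) _ _

theorem slopeEstimator_sub_affine {T : ℝ} (hT : T ≠ 0) {x : ℝ → ℝ}
    (hx : IntervalIntegrable x volume 0 T) (a c : ℝ) :
    slopeEstimator T (fun t => x t - (a * t + c)) = slopeEstimator T x - a := by
  have hweighted : IntervalIntegrable (fun τ => (2 * τ - T) * x τ) volume 0 T :=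
    hx.continuousOn_mul (by fun_prop)
  simp only [slopeEstimator, mul_sub]
  rw [intervalIntegral.integral_sub hweighted (Continuous.intervalIntegrable (by fun_prop) _ _),
    integral_weight_mul_affine]
  field_simp

theorem integral_sq_weight (T : ℝ) : ∫ τ in (0 : ℝ)..T, (2 * τ - T) ^ 2 = T ^ 3 / 3 := by
  rw [intervalIntegral.integral_comp_mul_sub (fun u => u ^ 2) two_ne_zero, integral_pow]
  ring

theorem abs_slopeEstimator_le_of_lipschitzOnWith {T : ℝ} (hT : 0 < T) {K : ℝ≥0} {y : ℝ → ℝ}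
    (hy : LipschitzOnWith K y (Icc 0 T)) : |slopeEstimator T y| ≤ K := by
  have hcentre : slopeEstimator T y = slopeEstimator T (fun t => y t - y (T / 2)) := by
    simpa using (slopeEstimator_sub_affine hT.ne'
      (hy.continuousOn.intervalIntegrable_of_Icc hT.le) 0 (y (T / 2))).symm
  have hpoint : ∀ τ ∈ Ioc 0 T, ‖(2 * τ - T) * (y τ - y (T / 2))‖ ≤ K / 2 * (2 * τ - T) ^ 2 := by
    intro τ hτ
    have hlip := hy.dist_le_mul τ (Ioc_subset_Icc_self hτ) (T / 2) ⟨by linarith, by linarith⟩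
    rw [Real.dist_eq, Real.dist_eq] at hlip
    rw [Real.norm_eq_abs, abs_mul]
    calc |2 * τ - T| * |y τ - y (T / 2)| ≤ |2 * τ - T| * (K * |τ - T / 2|) := by gcongr
      _ = K / 2 * (|2 * τ - T| * |2 * τ - T|) := by
        rw [show 2 * τ - T = 2 * (τ - T / 2) by ring, abs_mul, abs_two]; ring
      _ = K / 2 * (2 * τ - T) ^ 2 := by rw [abs_mul_abs_self, sq]
  have hintegral := intervalIntegral.norm_integral_le_of_norm_le (μ := volume) hT.le
    (Filter.Eventually.of_forall hpoint) (Continuous.intervalIntegrable (by fun_prop) _ _)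
  rw [Real.norm_eq_abs, intervalIntegral.integral_const_mul, integral_sq_weight] at hintegral
  rw [hcentre, slopeEstimator, abs_mul, abs_of_pos (by positivity : (0 : ℝ) < 6 / T ^ 3)]
  calc 6 / T ^ 3 * _ ≤ 6 / T ^ 3 * (K / 2 * (T ^ 3 / 3)) := by gcongr
    _ = (K : ℝ) := by field_simp; ring

theorem abs_slopeEstimator_sub_le {T ε a : ℝ} (hT : 0 < T) (hε : 0 ≤ ε) {x x' : ℝ → ℝ}
    (hderiv : ∀ t ∈ Icc 0 T, HasDerivAt x (x' t) t)
    (hclose : ∀ t ∈ Icc 0 T, |x' t - a| ≤ ε) :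
    |slopeEstimator T x - a| ≤ ε := by
  have hlip : LipschitzOnWith (⟨ε, hε⟩ : ℝ≥0) (fun t => x t - a * t) (Icc 0 T) := by
    refine (convex_Icc 0 T).lipschitzOnWith_of_nnnorm_hasDerivWithin_le (f' := fun t => x' t - a)
      (fun t ht => ?_) (fun t ht => ?_)
    · have hline : HasDerivAt (fun t => a * t) a t := by simpa using (hasDerivAt_id' t).const_mul a
      exact ((hderiv t ht).sub hline).hasDerivWithinAt
    · exact NNReal.coe_le_coe.mp (hclose t ht)
  have hxint : IntervalIntegrable x volume 0 T :=
    (HasDerivAt.continuousOn hderiv).intervalIntegrable_of_Icc hT.le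
  rw [← slopeEstimator_sub_affine hT.ne' hxint a 0]
  simp only [add_zero]
  exact abs_slopeEstimator_le_of_lipschitzOnWith hT hlip

theorem estimator_error_bound_general (T ε a₁ : ℝ) (hT : 0 < T) (hε : 0 ≤ ε)
    (x x' : ℝ → ℝ)
    (hderiv : ∀ t ∈ Set.Icc (0 : ℝ) T, HasDerivAt x (x' t) t)
    (hclose : ∀ t ∈ Set.Icc (0 : ℝ) T, |x' t - a₁| ≤ ε) :
    |(6 / T ^ 3) * (∫ τ in (0 : ℝ)..T, (2 * τ - T) * x τ) - a₁| ≤ (3 / 2) * ε := by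
  have hsharp := abs_slopeEstimator_sub_le hT hε hderiv hclose
  rw [slopeEstimator] at hsharp
  linarith

theorem estimator_error_bound (T ε a₁ : ℝ) (hT : 0 < T) (hε : 0 ≤ ε)
    (x x' : ℝ → ℝ)
    (hderiv : ∀ t ∈ Set.Icc (0 : ℝ) T, HasDerivAt x (x' t) t)
    (hcont : ContinuousOn x' (Set.Icc 0 T))
    (hclose : ∀ t ∈ Set.Icc (0 : ℝ) T, |x' t - a₁| ≤ ε) :
    |(6 / T ^ 3) * (∫ τ in (0 : ℝ)..T, (2 * τ - T) * x τ) - a₁| ≤ (3 / 2) * ε :=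
  estimator_error_bound_general T ε a₁ hT hε x x' hderiv hclose
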